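/- The vector (h_k^{n,m})_{k=0}^{n+m+1} defined by h_k^{n,m} = Σ over walks of length m from an element of {0,...,n+1} to k of the walk's weight, is palindromic: h_k^{n,m} = h_{n+m+1-k}^{n,m} for all k. -/
import Mathlib

/-- A walk of length `m` (starting at position `n`): a sequence `w(n), ..., w(n+m)` (encoded
by `w : Fin (m+1) → ℕ`, `w i` being the value at position `n + i`) with each step
`w(i+1) ∈ {w(i), w(i)+1}`. -/
def IsWalk (m : ℕ) (w : Fin (m + 1) → ℕ) : Prop :=
  ∀ i : Fin m, w i.succ = w i.castSucc ∨ w i.succ = w i.castSucc + 1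

/-- The weight of a walk: the product over the steps, a constant step at position `n+i`
contributing `w(n+i)` and an increasing step contributing `(n+i)+1 - w(n+i)`. -/
def walkWeight (n m : ℕ) (w : Fin (m + 1) → ℕ) : ℕ :=
  ∏ i : Fin m,
    if w i.succ = w i.castSucc then w i.castSucc else n + (i : ℕ) + 1 - w i.castSucc

/-- `h_k^{n,m}`: the sum of the weights of all walks of length `m` from some
`a ∈ {0,...,n+1}` to `k`. -/
noncomputable def hwalk (n m k : ℕ) : ℕ :=
  ∑ᶠ w ∈ {w : Fin (m + 1) → ℕ | IsWalk m w ∧ w 0 ≤ n + 1 ∧ w (Fin.last m) = k},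
    walkWeight n m w

/-! ### Auxiliary recursion -/

def Hrec (n : ℕ) : ℕ → ℕ → ℕ
  | 0, k => if k ≤ n + 1 then 1 else 0
  | (m+1), 0 => 0
  | (m+1), (k+1) => (k+1) * Hrec n m (k+1) + (n + m + 1 - k) * Hrec n m k

lemma Hrec_succ (n m k : ℕ) :
    Hrec n (m+1) (k+1) = (k+1) * Hrec n m (k+1) + (n + m + 1 - k) * Hrec n m k := rfl

lemma Hrec_succ_zero (n m : ℕ) : Hrec n (m+1) 0 = 0 := rfl

lemma Hrec_zero (n : ℕ) : ∀ m k, n + m + 1 < k → Hrec n m k = 0 := by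
  intro m
  induction m with
  | zero => intro k hk; simp [Hrec]; omega
  | succ m ih =>
    intro k hk
    match k, hk with
    | (k+1), hk =>
      rw [Hrec_succ, ih (k+1) (by omega), ih k (by omega)]
      simp

lemma Hrec_pal (n : ℕ) : ∀ m, ∀ k ≤ n + m + 1, Hrec n m k = Hrec n m (n + m + 1 - k) := by
  intro m
  induction m with
  | zero => intro k hk; simp [Hrec]; omega
  | succ m ih =>
    intro k hk
    match k with
    | 0 =>
      have h1 : n + (m+1) + 1 - 0 = (n + m + 1) + 1 := by omega
      rw [h1, Hrec_succ_zero, Hrec_succ, Hrec_zero n m (n+m+1+1) (by omega)]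
      have h2 : n + m + 1 - (n + m + 1) = 0 := by omega
      rw [h2]
      simp
    | (k+1) =>
      by_cases hk' : k ≤ n + m
      · have h1 : n + (m+1) + 1 - (k+1) = (n + m - k) + 1 := by omega
        rw [h1, Hrec_succ, Hrec_succ, ih (k+1) (by omega), ih k (by omega)]
        have e1 : n + m + 1 - (k+1) = n + m - k := by omega
        have e2 : n + m + 1 - k = (n+m-k) + 1 := by omega
        have e3 : n + m + 1 - (n+m-k) = k + 1 := by omega
        rw [e1, e2, e3]
        ring
      · have hk2 : k = n + m + 1 := by omega
        subst hk2
        have h1 : n + (m+1) + 1 - (n+m+1+1) = 0 := by omega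
        rw [h1, Hrec_succ_zero, Hrec_succ, Hrec_zero n m _ (by omega)]
        have h2 : n + m + 1 - (n + m + 1) = 0 := by omega
        rw [h2]
        simp

/-! ### Walk sets -/

def walkSet (n m k : ℕ) : Set (Fin (m + 1) → ℕ) :=
  {w | IsWalk m w ∧ w 0 ≤ n + 1 ∧ w (Fin.last m) = k}

lemma IsWalk.monotone {m : ℕ} {w : Fin (m + 1) → ℕ} (h : IsWalk m w) : Monotone w := by
  rw [Fin.monotone_iff_le_succ]
  intro i
  rcases h i with h' | h' <;> omega

lemma walkSet_finite (n m k : ℕ) : (walkSet n m k).Finite := by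
  apply Set.Finite.subset (Set.Finite.pi (t := fun _ : Fin (m+1) => Set.Iic k)
    (fun _ => Set.finite_Iic k))
  rintro w ⟨hw, _, hlast⟩ i _
  exact hlast ▸ hw.monotone (Fin.le_last i)

lemma hwalk_eq_sum (n m k : ℕ) :
    hwalk n m k = ∑ w ∈ (walkSet_finite n m k).toFinset, walkWeight n m w := by
  rw [hwalk, ← finsum_mem_coe_finset, Set.Finite.coe_toFinset]
  rfl

lemma hwalk_base (n k : ℕ) : hwalk n 0 k = if k ≤ n + 1 then 1 else 0 := by
  rw [hwalk_eq_sum]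
  have hset : walkSet n 0 k = if k ≤ n + 1 then {fun _ => k} else ∅ := by
    split_ifs with h
    · ext w
      constructor
      · rintro ⟨-, h0, hl⟩
        funext i
        have : i = 0 := Fin.fin_one_eq_zero i
        rw [this]; exact hl
      · rintro rfl
        exact ⟨fun i => i.elim0, h, rfl⟩
    · ext w
      simp only [Set.mem_empty_iff_false, iff_false]
      rintro ⟨-, h0, hl⟩
      exact h (hl ▸ h0)
  split_ifs with h
  · have ht : (walkSet_finite n 0 k).toFinset = {fun _ => k} := by
      ext w; simp [Set.Finite.mem_toFinset, hset, h]
    rw [ht, Finset.sum_singleton]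
    simp [walkWeight]
  · have ht : (walkSet_finite n 0 k).toFinset = ∅ := by
      ext w; simp [Set.Finite.mem_toFinset, hset, h]
    rw [ht, Finset.sum_empty]

/-! ### snoc lemmas -/

lemma isWalk_snoc_iff {m : ℕ} {v : Fin (m+1) → ℕ} {a : ℕ} :
    IsWalk (m+1) (Fin.snoc v a) ↔ IsWalk m v ∧ (a = v (Fin.last m) ∨ a = v (Fin.last m) + 1) := by
  constructor
  · intro h
    refine ⟨fun j => ?_, ?_⟩
    · have := h j.castSucc
      simpa only [Fin.succ_castSucc, Fin.snoc_castSucc] using this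
    · have := h (Fin.last m)
      simpa only [Fin.succ_last, Fin.snoc_last, Fin.snoc_castSucc] using this
  · rintro ⟨h, hl⟩ i
    refine Fin.lastCases ?_ (fun j => ?_) i
    · simpa only [Fin.succ_last, Fin.snoc_last, Fin.snoc_castSucc] using hl
    · simpa only [Fin.succ_castSucc, Fin.snoc_castSucc] using h j

lemma walkWeight_snoc (n m : ℕ) (v : Fin (m+1) → ℕ) (a : ℕ) :
    walkWeight n (m+1) (Fin.snoc v a) = walkWeight n m v *
      (if a = v (Fin.last m) then v (Fin.last m) else n + m + 1 - v (Fin.last m)) := by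
  rw [walkWeight, Fin.prod_univ_castSucc, walkWeight]
  congr 1
  · refine Finset.prod_congr rfl fun j _ => ?_
    simp only [Fin.succ_castSucc, Fin.snoc_castSucc, Fin.coe_castSucc]
  · simp only [Fin.succ_last, Fin.snoc_last, Fin.snoc_castSucc, Fin.val_last]

lemma snoc_zero_eq {m : ℕ} (v : Fin (m+1) → ℕ) (a : ℕ) :
    (Fin.snoc v a : Fin (m+2) → ℕ) 0 = v 0 := by
  have : (0 : Fin (m+2)) = Fin.castSucc 0 := by simp
  rw [this, Fin.snoc_castSucc]

lemma mem_walkSet_snoc_iff {n m k : ℕ} {v : Fin (m+1) → ℕ} {a : ℕ} :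
    (Fin.snoc v a : Fin (m+2) → ℕ) ∈ walkSet n (m+1) k ↔
      IsWalk m v ∧ (a = v (Fin.last m) ∨ a = v (Fin.last m) + 1) ∧ v 0 ≤ n + 1 ∧ a = k := by
  unfold walkSet
  rw [Set.mem_setOf_eq, isWalk_snoc_iff, snoc_zero_eq, Fin.snoc_last]
  tauto

/-- Decomposition of the walk set for positive endpoint. -/
lemma walkSet_succ (n m k : ℕ) :
    walkSet n (m+1) (k+1) =
      (fun v => (Fin.snoc v (k+1) : Fin (m+2) → ℕ)) '' (walkSet n m (k+1) ∪ walkSet n m k) := by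
  ext w
  constructor
  · rintro hw
    obtain ⟨hwalk', h0, hlast⟩ := hw
    refine ⟨Fin.init w, ?_, ?_⟩
    · have hw' : (Fin.snoc (Fin.init w) (w (Fin.last (m+1))) : Fin (m+2) → ℕ) = w :=
        Fin.snoc_init_self w
      rw [hlast] at hw'
      have hmem : (Fin.snoc (Fin.init w) (k+1) : Fin (m+2) → ℕ) ∈ walkSet n (m+1) (k+1) := by
        rw [hw']; exact ⟨hwalk', h0, hlast⟩
      rw [mem_walkSet_snoc_iff] at hmem
      obtain ⟨hv, hstep, h0', -⟩ := hmem
      rcases hstep with hstep | hstep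
      · left; exact ⟨hv, h0', hstep.symm⟩
      · right; exact ⟨hv, h0', by omega⟩
    · have hw' : (Fin.snoc (Fin.init w) (w (Fin.last (m+1))) : Fin (m+2) → ℕ) = w :=
        Fin.snoc_init_self w
      rw [hlast] at hw'
      exact hw'
  · rintro ⟨v, hv, rfl⟩
    rw [mem_walkSet_snoc_iff]
    rcases hv with ⟨hwv, h0, hlast⟩ | ⟨hwv, h0, hlast⟩
    · exact ⟨hwv, Or.inl hlast.symm, h0, rfl⟩
    · exact ⟨hwv, Or.inr (by omega), h0, rfl⟩

lemma snoc_inj {m : ℕ} {a : ℕ} : Function.Injective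
    (fun v : Fin (m+1) → ℕ => (Fin.snoc v a : Fin (m+2) → ℕ)) := by
  intro v v' h
  have := congrArg Fin.init h
  simpa [Fin.init_snoc] using this

lemma hwalk_succ_zero (n m : ℕ) : hwalk n (m+1) 0 = 0 := by
  rw [hwalk_eq_sum]
  refine Finset.sum_eq_zero fun w hw => ?_
  rw [Set.Finite.mem_toFinset] at hw
  obtain ⟨hwalk', h0, hlast⟩ := hw
  have hcast : w ((Fin.last m).castSucc) = 0 := by
    have h1 : w ((Fin.last m).castSucc) ≤ w (Fin.last (m+1)) :=
      hwalk'.monotone (Fin.le_last _)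
    omega
  have hsucc : w ((Fin.last m).succ) = 0 := by
    rw [Fin.succ_last]; exact hlast
  refine Finset.prod_eq_zero (Finset.mem_univ (Fin.last m)) ?_
  rw [if_pos (by omega)]
  exact hcast

lemma hwalk_succ (n m k : ℕ) :
    hwalk n (m+1) (k+1) = (k+1) * hwalk n m (k+1) + (n + m + 1 - k) * hwalk n m k := by
  rw [hwalk_eq_sum, hwalk_eq_sum, hwalk_eq_sum]
  have hdisj : Disjoint (walkSet_finite n m (k+1)).toFinset (walkSet_finite n m k).toFinset := by
    rw [Finset.disjoint_left]
    intro v hv hv'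
    rw [Set.Finite.mem_toFinset] at hv hv'
    have h1 := hv.2.2
    have h2 := hv'.2.2
    omega
  have hT : (walkSet_finite n (m+1) (k+1)).toFinset =
      ((walkSet_finite n m (k+1)).toFinset ∪ (walkSet_finite n m k).toFinset).image
        (fun v => (Fin.snoc v (k+1) : Fin (m+2) → ℕ)) := by
    ext w
    simp only [Set.Finite.mem_toFinset, Finset.mem_image, Finset.mem_union]
    rw [walkSet_succ]
    constructor
    · rintro ⟨v, hv, rfl⟩
      exact ⟨v, by simpa [Set.Finite.mem_toFinset] using hv, rfl⟩
    · rintro ⟨v, hv, rfl⟩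
      refine ⟨v, ?_, rfl⟩
      simpa [Set.Finite.mem_toFinset] using hv
  rw [hT, Finset.sum_image (fun x _ y _ h => snoc_inj h), Finset.sum_union hdisj]
  congr 1
  · rw [Finset.mul_sum]
    refine Finset.sum_congr rfl fun v hv => ?_
    rw [Set.Finite.mem_toFinset] at hv
    rw [walkWeight_snoc, hv.2.2, if_pos rfl]
    ring
  · rw [Finset.mul_sum]
    refine Finset.sum_congr rfl fun v hv => ?_
    rw [Set.Finite.mem_toFinset] at hv
    rw [walkWeight_snoc, hv.2.2, if_neg (by omega)]
    ring

lemma hwalk_eq_Hrec (n : ℕ) : ∀ m k, hwalk n m k = Hrec n m k := by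
  intro m
  induction m with
  | zero => intro k; rw [hwalk_base]; rfl
  | succ m ih =>
    intro k
    match k with
    | 0 => rw [hwalk_succ_zero, Hrec_succ_zero]
    | (k+1) => rw [hwalk_succ, Hrec_succ, ih (k+1), ih k]

/-- The vector `(h_k^{n,m})_{k=0}^{n+m+1}` is palindromic: `h_k^{n,m} = h_{n+m+1-k}^{n,m}`. -/
theorem stmt12 (n m : ℕ) : ∀ k ≤ n + m + 1, hwalk n m k = hwalk n m (n + m + 1 - k) := by
  intro k hk
  rw [hwalk_eq_Hrec, hwalk_eq_Hrec]
  exact Hrec_pal n m k hk
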